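/- In the recollement gluing situation, the glued weight structure is unique: if w and w′ are weight structures on 𝒞 such that i_!(= i_*), j_!, j^*, and i^* are all left weight-exact with respect to both (relative to fixed weight structures w_𝒟 on 𝒟 and w_ℰ on ℰ), then w = w′. -/

import Mathlib

open CategoryTheory CategoryTheory.Limits CategoryTheory.Pretriangulated ZeroObject

universe v u

/-- A weight structure (homological convention) on a triangulated category. -/
structure WeightStructure (C : Type u) [Category.{v} C] [Preadditive C] [HasZeroObject C]
    [HasBinaryBiproducts C] [HasShift C ℤ] [∀ n : ℤ, (shiftFunctor C n).Additive]
    [Pretriangulated C] where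
  le : Set C
  ge : Set C
  le_zero : (0 : C) ∈ le
  ge_zero : (0 : C) ∈ ge
  le_retract : ∀ X Y : C, (∃ (i : X ⟶ Y) (r : Y ⟶ X), i ≫ r = 𝟙 X) → Y ∈ le → X ∈ le
  ge_retract : ∀ X Y : C, (∃ (i : X ⟶ Y) (r : Y ⟶ X), i ≫ r = 𝟙 X) → Y ∈ ge → X ∈ ge
  le_add : ∀ X Y : C, X ∈ le → Y ∈ le → (X ⊞ Y) ∈ le
  ge_add : ∀ X Y : C, X ∈ ge → Y ∈ ge → (X ⊞ Y) ∈ ge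
  le_shift : ∀ X : C, X ∈ le → X⟦(-1 : ℤ)⟧ ∈ le
  ge_shift : ∀ X : C, X ∈ ge → X⟦(1 : ℤ)⟧ ∈ ge
  orth : ∀ X ∈ le, ∀ Y ∈ ge, ∀ f : X ⟶ Y⟦(1 : ℤ)⟧, f = 0
  decomp : ∀ M : C, ∃ (B A : C) (f : B ⟶ M) (g : M ⟶ A) (h : A ⟶ B⟦(1 : ℤ)⟧),
    B ∈ le ∧ A⟦(-1 : ℤ)⟧ ∈ ge ∧ Triangle.mk f g h ∈ distTriang C

/-- Gluing data (recollement) `D → C → E` of triangulated categories: the six functors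
`i^* ⊣ i_* (= i_!) ⊣ i^!` and `j_! ⊣ j^* (= j^!) ⊣ j_*`, with `i_*` fully faithful,
`j^* ∘ i_* = 0`, and the two gluing distinguished triangles
`j_! j^* M → M → i_* i^* M → [1]` and `i_* i^! M → M → j_* j^* M → [1]`. -/
structure Recollement (D C E : Type u) [Category.{v} D] [Category.{v} C] [Category.{v} E]
    [Preadditive D] [HasZeroObject D] [HasShift D ℤ]
    [∀ n : ℤ, (shiftFunctor D n).Additive] [Pretriangulated D]
    [Preadditive C] [HasZeroObject C] [HasShift C ℤ]
    [∀ n : ℤ, (shiftFunctor C n).Additive] [Pretriangulated C]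
    [Preadditive E] [HasZeroObject E] [HasShift E ℤ]
    [∀ n : ℤ, (shiftFunctor E n).Additive] [Pretriangulated E] where
  /-- `i_* = i_!` -/
  iStar : D ⥤ C
  /-- `i^*` -/
  iUp : C ⥤ D
  /-- `i^!` -/
  iShriek : C ⥤ D
  /-- `j^* = j^!` -/
  jStar : C ⥤ E
  /-- `j_!` -/
  jShriek : E ⥤ C
  /-- `j_*` -/
  jLower : E ⥤ C
  adj₁ : iUp ⊣ iStar
  adj₂ : iStar ⊣ iShriek
  adj₃ : jShriek ⊣ jStar
  adj₄ : jStar ⊣ jLower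
  iFull : iStar.Full
  iFaithful : iStar.Faithful
  ji_zero : ∀ X : D, IsZero (jStar.obj (iStar.obj X))
  tri₁ : ∀ M : C, ∃ δ : iStar.obj (iUp.obj M) ⟶ (jShriek.obj (jStar.obj M))⟦(1 : ℤ)⟧,
    Triangle.mk (adj₃.counit.app M) (adj₁.unit.app M) δ ∈ distTriang C
  tri₂ : ∀ M : C, ∃ δ : jLower.obj (jStar.obj M) ⟶ (iStar.obj (iShriek.obj M))⟦(1 : ℤ)⟧,
    Triangle.mk (adj₂.counit.app M) (adj₄.unit.app M) δ ∈ distTriang C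

variable {D C E : Type u} [Category.{v} D] [Category.{v} C] [Category.{v} E]
  [Preadditive D] [HasZeroObject D] [HasBinaryBiproducts D] [HasShift D ℤ]
  [∀ n : ℤ, (shiftFunctor D n).Additive] [Pretriangulated D]
  [Preadditive C] [HasZeroObject C] [HasBinaryBiproducts C] [HasShift C ℤ]
  [∀ n : ℤ, (shiftFunctor C n).Additive] [Pretriangulated C]
  [Preadditive E] [HasZeroObject E] [HasBinaryBiproducts E] [HasShift E ℤ]
  [∀ n : ℤ, (shiftFunctor E n).Additive] [Pretriangulated E]

/-! The class `w.le` is closed under extensions, and the gluing triangle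
`j_! j^* M → M → i_* i^* M → [1]` exhibits every `M` as an extension of `i_* i^* M` by
`j_! j^* M`. So if `M ∈ w.le`, left weight-exactness of `j^*`, `i^*` for `w` and of `j_!`,
`i_*` for `w'` puts both ends in `w'.le`, whence `M ∈ w'.le`. Thus `w.le = w'.le`, and the
`ge` class of a weight structure is determined by its `le` class by orthogonality. -/

noncomputable def Triangle.retractObj₁OfMor₂EqZero (T : Triangle C) (hT : T ∈ distTriang C)
    (h : T.mor₂ = 0) :
    Retract T.obj₂ T.obj₁ where
  i := (T.coyoneda_exact₂ hT (𝟙 T.obj₂) (by simp [h])).choose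
  r := T.mor₁
  retract := (T.coyoneda_exact₂ hT (𝟙 T.obj₂) (by simp [h])).choose_spec.symm

noncomputable def Triangle.retractObj₃OfMor₁EqZero (T : Triangle C) (hT : T ∈ distTriang C)
    (h : T.mor₁ = 0) :
    Retract T.obj₂ T.obj₃ where
  i := T.mor₂
  r := (T.yoneda_exact₂ hT (𝟙 T.obj₂) (by simp [h])).choose
  retract := (T.yoneda_exact₂ hT (𝟙 T.obj₂) (by simp [h])).choose_spec.symm

namespace WeightStructure

variable (w : WeightStructure C)

lemma mem_le_of_retract {X Y : C} (h : Retract X Y) (hY : Y ∈ w.le) : X ∈ w.le :=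
  w.le_retract X Y ⟨h.i, h.r, h.retract⟩ hY

lemma mem_ge_of_retract {X Y : C} (h : Retract X Y) (hY : Y ∈ w.ge) : X ∈ w.ge :=
  w.ge_retract X Y ⟨h.i, h.r, h.retract⟩ hY

lemma hom_eq_zero {X Y : C} (hX : X ∈ w.le) (hY : Y⟦(-1 : ℤ)⟧ ∈ w.ge) (f : X ⟶ Y) :
    f = 0 := by
  rw [← cancel_mono (shiftNegShift Y (1 : ℤ)).inv, zero_comp]
  exact w.orth X hX _ hY _

lemma mem_ge_iff (Y : C) : Y ∈ w.ge ↔ ∀ X ∈ w.le, ∀ f : X ⟶ Y⟦(1 : ℤ)⟧, f = 0 := by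
  refine ⟨fun hY X hX f => w.orth X hX Y hY f, fun h => ?_⟩
  obtain ⟨B, A, f, g, δ, hB, hA, hT⟩ := w.decomp (Y⟦(1 : ℤ)⟧)
  have hretract : Retract (Y⟦(1 : ℤ)⟧) A :=
    Triangle.retractObj₃OfMor₁EqZero _ hT (h B hB f)
  exact w.mem_ge_of_retract ((Retract.ofIso (shiftShiftNeg Y (1 : ℤ)).symm).trans
    (hretract.map (shiftFunctor C (-1 : ℤ)))) hA

lemma mem_le_of_distTriang (T : Triangle C) (hT : T ∈ distTriang C)
    (h₁ : T.obj₁ ∈ w.le) (h₃ : T.obj₃ ∈ w.le) : T.obj₂ ∈ w.le := by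
  obtain ⟨B, A, f, g, δ, hB, hA, hT'⟩ := w.decomp T.obj₂
  obtain ⟨φ, hφ⟩ := T.yoneda_exact₂ hT g (w.hom_eq_zero h₁ hA _)
  have hg : g = 0 := by rw [hφ, w.hom_eq_zero h₃ hA φ, comp_zero]
  exact w.mem_le_of_retract (Triangle.retractObj₁OfMor₂EqZero (Triangle.mk f g δ) hT' hg) hB

lemma ext_of_le_eq {w' : WeightStructure C} (hle : w.le = w'.le) : w = w' := by
  have hge : w.ge = w'.ge := by
    ext Y
    rw [w.mem_ge_iff, w'.mem_ge_iff, hle]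
  cases w; cases w'
  cases hle; cases hge
  rfl

end WeightStructure

lemma Recollement.le_subset_le (R : Recollement D C E) {wD : WeightStructure D}
    {wE : WeightStructure E} {w w' : WeightStructure C}
    (hiStar : ∀ X ∈ wD.le, R.iStar.obj X ∈ w'.le)
    (hjShriek : ∀ X ∈ wE.le, R.jShriek.obj X ∈ w'.le)
    (hjStar : ∀ M ∈ w.le, R.jStar.obj M ∈ wE.le) (hiUp : ∀ M ∈ w.le, R.iUp.obj M ∈ wD.le) :
    w.le ⊆ w'.le := fun M hM => by
  obtain ⟨_, hT⟩ := R.tri₁ M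
  exact w'.mem_le_of_distTriang _ hT (hjShriek _ (hjStar M hM)) (hiStar _ (hiUp M hM))

theorem stmt18_general (R : Recollement D C E)
    (wD : WeightStructure D) (wE : WeightStructure E)
    (w w' : WeightStructure C)
    (h1 : ∀ X ∈ wD.le, R.iStar.obj X ∈ w.le)
    (h2 : ∀ X ∈ wE.le, R.jShriek.obj X ∈ w.le)
    (h3 : ∀ M ∈ w.le, R.jStar.obj M ∈ wE.le)
    (h4 : ∀ M ∈ w.le, R.iUp.obj M ∈ wD.le)
    (h1' : ∀ X ∈ wD.le, R.iStar.obj X ∈ w'.le)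
    (h2' : ∀ X ∈ wE.le, R.jShriek.obj X ∈ w'.le)
    (h3' : ∀ M ∈ w'.le, R.jStar.obj M ∈ wE.le)
    (h4' : ∀ M ∈ w'.le, R.iUp.obj M ∈ wD.le) :
    w = w' :=
  w.ext_of_le_eq <| (R.le_subset_le h1' h2' h3 h4).antisymm
    (R.le_subset_le h1 h2 h3' h4')

/-- Uniqueness of the glued weight structure: if `w` and `w'` are weight structures on
the middle category `C` of a recollement such that `i_! (= i_*)`, `j_!`, `j^*` and `i^*`
are left weight-exact with respect to both (relative to fixed weight structures on `D`
and `E`), then `w = w'`. -/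
theorem stmt18 (R : Recollement D C E)
    [R.iStar.CommShift ℤ] [R.iStar.IsTriangulated]
    [R.iUp.CommShift ℤ] [R.iUp.IsTriangulated]
    [R.iShriek.CommShift ℤ] [R.iShriek.IsTriangulated]
    [R.jStar.CommShift ℤ] [R.jStar.IsTriangulated]
    [R.jShriek.CommShift ℤ] [R.jShriek.IsTriangulated]
    [R.jLower.CommShift ℤ] [R.jLower.IsTriangulated]
    (wD : WeightStructure D) (wE : WeightStructure E)
    (w w' : WeightStructure C)
    (h1 : ∀ X ∈ wD.le, R.iStar.obj X ∈ w.le)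
    (h2 : ∀ X ∈ wE.le, R.jShriek.obj X ∈ w.le)
    (h3 : ∀ M ∈ w.le, R.jStar.obj M ∈ wE.le)
    (h4 : ∀ M ∈ w.le, R.iUp.obj M ∈ wD.le)
    (h1' : ∀ X ∈ wD.le, R.iStar.obj X ∈ w'.le)
    (h2' : ∀ X ∈ wE.le, R.jShriek.obj X ∈ w'.le)
    (h3' : ∀ M ∈ w'.le, R.jStar.obj M ∈ wE.le)
    (h4' : ∀ M ∈ w'.le, R.iUp.obj M ∈ wD.le) :
    w = w' :=
  stmt18_general R wD wE w w' h1 h2 h3 h4 h1' h2' h3' h4'
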